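/- arXiv:1207.4859 — 7 statements merged into one kernel-verified Lean document; each statement's English description precedes it below -/
import Mathlib

section
/- For every ε > 0, the Yosida regularization ln_ε of the logarithm is differentiable on ℝ, and its derivative satisfies ln_ε'(x) = 1/(ρ_ε(x) + ε) for all x ∈ ℝ. -/
/-!
The resolvent `ρ` is a right inverse of `φ t = t + ε log t`, which is strictly increasing on
`(0, ∞)`; hence `ρ` is monotone with range `(0, ∞)`, so continuous, and the inverse function
theorem gives `ρ' x = 1 / φ' (ρ x) = ρ x / (ρ x + ε)`. Then `ln_ε' = (1 - ρ') / ε = 1 / (ρ + ε)`.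
-/

open Real Set Filter Topology

theorem strictMonoOn_add_mul_log {ε : ℝ} (hε : 0 ≤ ε) :
    StrictMonoOn (fun t => t + ε * log t) (Ioi 0) :=
  strictMonoOn_id.add_monotone fun _ ha _ _ hab =>
    mul_le_mul_of_nonneg_left (log_le_log ha hab) hε

section RightInverse

variable {α : Type*} [LinearOrder α] {s : Set α}

theorem StrictMonoOn.monotone_of_rightInverse {β : Type*} [Preorder β] {f : α → β} {g : β → α}
    (hf : StrictMonoOn f s) (hgs : ∀ y, g y ∈ s)
    (hfg : Function.RightInverse g f) : Monotone g := fun a b hab =>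
  (hf.le_iff_le (hgs a) (hgs b)).1 (by rwa [hfg a, hfg b])

theorem StrictMonoOn.continuousAt_of_rightInverse {β : Type*} [LinearOrder β]
    [TopologicalSpace α] [OrderTopology α] [DenselyOrdered α] [TopologicalSpace β]
    [OrderTopology β] {f : α → β} {g : β → α} (hf : StrictMonoOn f s) (hgs : ∀ y, g y ∈ s)
    (hfg : Function.RightInverse g f) {b : β} (hs : s ∈ 𝓝 (g b)) : ContinuousAt g b := by
  have hs_range : s ⊆ g '' univ := fun t ht =>
    ⟨f t, mem_univ _, hf.injOn (hgs _) ht (hfg _)⟩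
  exact continuousAt_of_monotoneOn_of_image_mem_nhds
    ((hf.monotone_of_rightInverse hgs hfg).monotoneOn _) univ_mem (mem_of_superset hs hs_range)

end RightInverse

theorem HasDerivAt.of_rightInverse_of_strictMonoOn {f g : ℝ → ℝ} {s : Set ℝ} {f' b : ℝ}
    (hf' : HasDerivAt f f' (g b)) (hf : StrictMonoOn f s) (hgs : ∀ y, g y ∈ s)
    (hfg : Function.RightInverse g f) (hs : s ∈ 𝓝 (g b)) (hne : f' ≠ 0) :
    HasDerivAt g f'⁻¹ b :=
  hf'.of_local_left_inverse (hf.continuousAt_of_rightInverse hgs hfg hs) hne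
    (Eventually.of_forall hfg)

/-- For every ε > 0, the Yosida regularization `ln_ε(x) = (x − ρ_ε(x))/ε`
of the logarithm is differentiable on ℝ with derivative `ln_ε'(x) = 1/(ρ_ε(x) + ε)`,
where ρ_ε is the ε-resolvent of the logarithm, i.e. the inverse of
`x ↦ x + ε·log x : (0,∞) → ℝ`. -/
theorem stmt2 (ε : ℝ) (hε : 0 < ε) (ρ : ℝ → ℝ)
    (hρ : ∀ x : ℝ, 0 < ρ x ∧ ρ x + ε * Real.log (ρ x) = x) (x : ℝ) :
    HasDerivAt (fun y : ℝ => (y - ρ y) / ε) (1 / (ρ x + ε)) x := by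
  have hρx : 0 < ρ x := (hρ x).1
  have hφ' : HasDerivAt (fun t => t + ε * log t) (1 + ε * (ρ x)⁻¹) (ρ x) :=
    (hasDerivAt_id _).add ((hasDerivAt_log hρx.ne').const_mul ε)
  have hρ' : HasDerivAt ρ (1 + ε * (ρ x)⁻¹)⁻¹ x :=
    hφ'.of_rightInverse_of_strictMonoOn (strictMonoOn_add_mul_log hε.le) (fun y => (hρ y).1)
      (fun y => (hρ y).2) (Ioi_mem_nhds hρx) (by positivity)
  refine (((hasDerivAt_id' x).sub hρ').div_const ε).congr_deriv ?_
  field_simp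
  ring
end

section
/- There exists ε* > 0 such that for all ε ∈ (0, ε*) and all x > 0, the derivative of the Yosida regularization of the logarithm satisfies ln_ε'(x) ≤ 2/x. -/
/-- There exists ε* > 0 such that for all ε ∈ (0, ε*) and all x > 0,
the derivative of the Yosida regularization `ln_ε(y) = (y − ρ_ε(y))/ε` of the
logarithm satisfies `ln_ε'(x) ≤ 2/x`. Here ρ_ε is the ε-resolvent of the logarithm. -/
theorem stmt3 :
    ∃ εstar : ℝ, 0 < εstar ∧ ∀ ε : ℝ, 0 < ε → ε < εstar →
      ∀ ρ : ℝ → ℝ, (∀ x : ℝ, 0 < ρ x ∧ ρ x + ε * Real.log (ρ x) = x) →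
        ∀ x : ℝ, 0 < x → deriv (fun y : ℝ => (y - ρ y) / ε) x ≤ 2 / x := by
  refine ⟨1, one_pos, ?_⟩
  intro ε hε hε1 ρ hρ x hx
  set g : ℝ → ℝ := fun u => u + ε * Real.log u with hgdef
  have hρpos : ∀ y, 0 < ρ y := fun y => (hρ y).1
  have hρeq : ∀ y, g (ρ y) = y := fun y => (hρ y).2
  have hgmono : ∀ u v : ℝ, 0 < u → 0 < v → u < v → g u < g v := by
    intro u v hu hv huv
    have hlog : Real.log u ≤ Real.log v := Real.log_le_log hu huv.le
    have : ε * Real.log u ≤ ε * Real.log v := by nlinarith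
    simp only [hgdef]; linarith
  -- ρ is strictly monotone
  have hmono : StrictMono ρ := by
    intro a b hab
    by_contra h
    push_neg at h
    rcases eq_or_lt_of_le h with h' | h'
    · have : g (ρ b) = g (ρ a) := by rw [h']
      rw [hρeq, hρeq] at this; linarith
    · have := hgmono _ _ (hρpos b) (hρpos a) h'
      rw [hρeq, hρeq] at this; linarith
  -- ρ is a right inverse of g on positives
  have hsurj : ∀ u : ℝ, 0 < u → ρ (g u) = u := by
    intro u hu
    have h1 : g (ρ (g u)) = g u := hρeq (g u)
    by_contra h
    rcases lt_or_gt_of_ne h with h' | h'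
    · have := hgmono _ _ (hρpos (g u)) hu h'
      rw [h1] at this; exact lt_irrefl _ this
    · have := hgmono _ _ hu (hρpos (g u)) h'
      rw [h1] at this; exact lt_irrefl _ this
  -- range of ρ is (0, ∞)
  have hrange : Set.range ρ = Set.Ioi 0 := by
    ext u
    constructor
    · rintro ⟨y, rfl⟩; exact hρpos y
    · intro hu
      exact ⟨g u, hsurj u hu⟩
  -- ρ is continuous at x
  have hcont : ContinuousAt ρ x := by
    apply StrictMonoOn.continuousAt_of_image_mem_nhds
      (s := Set.univ) (hmono.strictMonoOn _) Filter.univ_mem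
    rw [Set.image_univ, hrange]
    exact Ioi_mem_nhds (hρpos x)
  set r := ρ x with hr
  have hrpos : 0 < r := hρpos x
  -- derivative of g at r
  have hgderiv : HasDerivAt g (1 + ε * r⁻¹) r := by
    have h1 : HasDerivAt Real.log r⁻¹ r := Real.hasDerivAt_log hrpos.ne'
    exact (hasDerivAt_id r).add (h1.const_mul ε)
  have hgne : (1 + ε * r⁻¹) ≠ 0 := by positivity
  have hρderiv : HasDerivAt ρ (1 + ε * r⁻¹)⁻¹ x :=
    HasDerivAt.of_local_left_inverse hcont hgderiv hgne
      (Filter.Eventually.of_forall hρeq)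
  have hderiv : HasDerivAt (fun y : ℝ => (y - ρ y) / ε)
      ((1 - (1 + ε * r⁻¹)⁻¹) / ε) x :=
    ((hasDerivAt_id x).sub hρderiv).div_const ε
  rw [hderiv.deriv]
  -- simplify: (1 - (1 + ε/r)⁻¹)/ε = 1/(r+ε)
  have hrε : 0 < r + ε := by positivity
  have hval : (1 - (1 + ε * r⁻¹)⁻¹) / ε = 1 / (r + ε) := by
    rw [inv_eq_one_div]
    field_simp
    ring
  rw [hval]
  have hlog : Real.log r ≤ r - 1 := Real.log_le_sub_one_of_pos hrpos
  have hxle : x ≤ 2 * (r + ε) := by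
    have hxeq : r + ε * Real.log r = x := hρeq x
    nlinarith
  rw [div_le_div_iff₀ hrε hx]
  nlinarith
end

section
/- For every ε > 0 and every x ∈ ℝ, the derivative of the Yosida regularization of the logarithm satisfies ln_ε'(x) ≥ 1/(|x| + 2 + ε). -/
/-!
`ρ` is strictly monotone with range `(0, ∞)`, hence continuous, so the inverse function theorem
applies: differentiating `ρ y + ε log ρ y = y` gives `ρ' = ρ / (ρ + ε)`, hence
`ln_ε' = (1 - ρ') / ε = 1 / (ρ + ε)`. It remains to bound `ρ`: where `ρ x > 1` the logarithm is
nonnegative, so `ρ x ≤ x`; in any case `ρ x ≤ |x| + 1`.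
-/

open Set Filter Topology

theorem StrictMonoOn.strictMono_of_leftInverse {α β : Type*} [LinearOrder α] [Preorder β]
    {f : α → β} {g : β → α} {s : Set α} (hf : StrictMonoOn f s) (hgs : ∀ y, g y ∈ s)
    (hfg : Function.LeftInverse f g) : StrictMono g := fun a b hab =>
  (hf.lt_iff_lt (hgs a) (hgs b)).1 (by rwa [hfg a, hfg b])

theorem Monotone.continuousAt_of_range_mem_nhds {α β : Type*} [LinearOrder α]
    [TopologicalSpace α] [OrderTopology α] [LinearOrder β] [TopologicalSpace β] [OrderTopology β]
    [DenselyOrdered β] {g : α → β} {a : α} (hg : Monotone g) (h : range g ∈ 𝓝 (g a)) :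
    ContinuousAt g a :=
  continuousAt_of_monotoneOn_of_image_mem_nhds (hg.monotoneOn univ) univ_mem (by rwa [image_univ])

namespace Real

def IsLogResolvent (ε : ℝ) (ρ : ℝ → ℝ) : Prop :=
  ∀ x, 0 < ρ x ∧ ρ x + ε * log (ρ x) = x

theorem strictMonoOn_add_mul_log {ε : ℝ} (hε : 0 < ε) :
    StrictMonoOn (fun t => t + ε * log t) (Ioi 0) := fun _ ha _ hb hab =>
  add_lt_add hab (mul_lt_mul_of_pos_left (strictMonoOn_log ha hb hab) hε)

theorem hasDerivAt_add_mul_log (ε : ℝ) {t : ℝ} (ht : t ≠ 0) :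
    HasDerivAt (fun t => t + ε * log t) (1 + ε * t⁻¹) t :=
  (hasDerivAt_id t).add ((hasDerivAt_log ht).const_mul ε)

namespace IsLogResolvent

variable {ε : ℝ} {ρ : ℝ → ℝ}

theorem strictMono (hε : 0 < ε) (hρ : IsLogResolvent ε ρ) : StrictMono ρ :=
  (strictMonoOn_add_mul_log hε).strictMono_of_leftInverse (fun x => (hρ x).1) (fun x => (hρ x).2)

theorem range_eq (hε : 0 < ε) (hρ : IsLogResolvent ε ρ) : range ρ = Ioi 0 := by
  refine Subset.antisymm (range_subset_iff.2 fun x => (hρ x).1) fun t (ht : 0 < t) => ?_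
  exact ⟨t + ε * log t, strictMonoOn_add_mul_log hε |>.injOn (hρ _).1 ht (hρ _).2⟩

theorem continuousAt (hε : 0 < ε) (hρ : IsLogResolvent ε ρ) (x : ℝ) : ContinuousAt ρ x :=
  (hρ.strictMono hε).monotone.continuousAt_of_range_mem_nhds
    (hρ.range_eq hε ▸ Ioi_mem_nhds (hρ x).1)

theorem hasDerivAt (hε : 0 < ε) (hρ : IsLogResolvent ε ρ) (x : ℝ) :
    HasDerivAt ρ (1 + ε * (ρ x)⁻¹)⁻¹ x :=
  (hasDerivAt_add_mul_log ε (hρ x).1.ne').of_local_left_inverse (hρ.continuousAt hε x)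
    (by have := (hρ x).1; positivity) (Eventually.of_forall fun y => (hρ y).2)

theorem hasDerivAt_yosida (hε : 0 < ε) (hρ : IsLogResolvent ε ρ) (x : ℝ) :
    HasDerivAt (fun y => (y - ρ y) / ε) (1 / (ρ x + ε)) x := by
  refine (((hasDerivAt_id x).sub (hρ.hasDerivAt hε x)).div_const ε).congr_deriv ?_
  have := (hρ x).1
  field_simp
  ring

theorem le_abs_add_one (hε : 0 ≤ ε) (hρ : IsLogResolvent ε ρ) (x : ℝ) : ρ x ≤ |x| + 1 := by
  rcases le_or_gt (ρ x) 1 with h | h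
  · linarith [abs_nonneg x]
  · have : 0 ≤ ε * log (ρ x) := mul_nonneg hε (log_nonneg h.le)
    linarith [(hρ x).2, le_abs_self x]

end IsLogResolvent

end Real

/-- For every ε > 0 and every x ∈ ℝ, the derivative of the Yosida
regularization `ln_ε(y) = (y − ρ_ε(y))/ε` of the logarithm satisfies
`ln_ε'(x) ≥ 1/(|x| + 2 + ε)`. Here ρ_ε is the ε-resolvent of the logarithm. -/
theorem stmt4 (ε : ℝ) (hε : 0 < ε) (ρ : ℝ → ℝ)
    (hρ : ∀ x : ℝ, 0 < ρ x ∧ ρ x + ε * Real.log (ρ x) = x) (x : ℝ) :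
    deriv (fun y : ℝ => (y - ρ y) / ε) x ≥ 1 / (|x| + 2 + ε) := by
  have hρ : Real.IsLogResolvent ε ρ := hρ
  rw [(hρ.hasDerivAt_yosida hε x).deriv]
  have hρx := (hρ x).1
  gcongr
  linarith [hρ.le_abs_add_one hε.le x]
end

section
/- There exists ε* > 0 such that for all ε ∈ (0, ε*) and all x ≥ 0, the function I_ε satisfies I_ε(x) ≤ (ε/2)·x² + 2x. -/
/-!
Writing `r = ρ_ε(s)`, the inequality `log r ≤ r - 1` gives `s = r + ε log r ≤ (1 + ε)(r + ε)`,
so the integrand `s L_ε'(s)` is at most `ε s + 1 + ε ≤ ε s + 2` once `ε ≤ 1`. The integrand is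
nonnegative for `s ≥ 0`, so the bound integrates without knowing integrability of `s L_ε'(s)`.
-/

open MeasureTheory Set

theorem intervalIntegral.integral_mono_of_nonneg {f g : ℝ → ℝ} {a b : ℝ} (hab : a ≤ b)
    (hf : ∀ s ∈ Ioc a b, 0 ≤ f s) (hg : IntervalIntegrable g volume a b)
    (hfg : ∀ s ∈ Ioc a b, f s ≤ g s) :
    ∫ s in a..b, f s ≤ ∫ s in a..b, g s := by
  rw [intervalIntegral.integral_of_le hab, intervalIntegral.integral_of_le hab]
  exact MeasureTheory.integral_mono_of_nonneg
    ((ae_restrict_iff' measurableSet_Ioc).2 (.of_forall hf)) hg.1 ((ae_restrict_iff' measurableSet_Ioc).2 (.of_forall hfg))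

theorem le_mul_add_of_add_mul_log_eq {ε r s : ℝ} (hε : 0 < ε) (hr : 0 < r)
    (hs : r + ε * Real.log r = s) : s ≤ (1 + ε) * (r + ε) := by
  nlinarith [Real.log_le_sub_one_of_pos hr]

theorem mul_add_inv_le_of_add_mul_log_eq {ε r s : ℝ} (hε : 0 < ε) (hr : 0 < r)
    (hs : r + ε * Real.log r = s) : s * (ε + 1 / (r + ε)) ≤ ε * s + (1 + ε) := by
  have : s * (1 / (r + ε)) ≤ 1 + ε := by
    rw [mul_one_div, div_le_iff₀ (by positivity)]
    exact le_mul_add_of_add_mul_log_eq hε hr hs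
  linarith [show s * (ε + 1 / (r + ε)) = ε * s + s * (1 / (r + ε)) by ring]

theorem integral_mul_add_const (ε c x : ℝ) :
    ∫ s in (0:ℝ)..x, (ε * s + c) = ε / 2 * x ^ 2 + c * x := by
  rw [intervalIntegral.integral_add ((continuous_const_mul ε).intervalIntegrable 0 x)
    intervalIntegrable_const, intervalIntegral.integral_const_mul, integral_id,
    intervalIntegral.integral_const, smul_eq_mul]
  ring

/-- There exists ε* > 0 such that for all ε ∈ (0, ε*) and all x ≥ 0,
`I_ε(x) := ∫₀ˣ s·L_ε'(s) ds ≤ (ε/2)·x² + 2x`, where `L_ε'(s) = ε + 1/(ρ_ε(s) + ε)`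
and ρ_ε is the ε-resolvent of the logarithm. -/
theorem stmt5 :
    ∃ εstar : ℝ, 0 < εstar ∧ ∀ ε : ℝ, 0 < ε → ε < εstar →
      ∀ ρ : ℝ → ℝ, (∀ x : ℝ, 0 < ρ x ∧ ρ x + ε * Real.log (ρ x) = x) →
        ∀ x : ℝ, 0 ≤ x →
          (∫ s in (0:ℝ)..x, s * (ε + 1 / (ρ s + ε))) ≤ ε / 2 * x ^ 2 + 2 * x := by
  refine ⟨1, one_pos, fun ε hε hε1 ρ hρ x hx => ?_⟩
  have hbound (s : ℝ) : s * (ε + 1 / (ρ s + ε)) ≤ ε * s + 2 := by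
    linarith [mul_add_inv_le_of_add_mul_log_eq hε (hρ s).1 (hρ s).2]
  have hnonneg (s : ℝ) (hs : s ∈ Ioc 0 x) : 0 ≤ s * (ε + 1 / (ρ s + ε)) := by
    have hρs := (hρ s).1
    exact mul_nonneg hs.1.le (by positivity)
  calc ∫ s in (0:ℝ)..x, s * (ε + 1 / (ρ s + ε))
      ≤ ∫ s in (0:ℝ)..x, (ε * s + 2) :=
        intervalIntegral.integral_mono_of_nonneg hx hnonneg
          ((by fun_prop : Continuous fun s : ℝ => ε * s + 2).intervalIntegrable 0 x)
          fun s _ => hbound s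
    _ = ε / 2 * x ^ 2 + 2 * x := integral_mul_add_const ε 2 x
end

section
/- For every ε > 0, the function x ↦ 1/L_ε'(x) is a contraction on ℝ: |1/L_ε'(x) − 1/L_ε'(y)| ≤ |x − y| for all x, y ∈ ℝ. -/
section aux

variable {ε : ℝ} {ρ : ℝ → ℝ}

private lemma rho_cont (hε : 0 < ε)
    (hρ : ∀ x : ℝ, 0 < ρ x ∧ ρ x + ε * Real.log (ρ x) = x) : Continuous ρ := by
  set g : Set.Ioi (0:ℝ) → ℝ := fun t => (t : ℝ) + ε * Real.log t with hg
  have hmono : StrictMono g := by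
    intro a b hab
    have ha : (0:ℝ) < a := a.2
    have hab' : (a:ℝ) < b := hab
    have := Real.log_lt_log ha hab'
    have := mul_lt_mul_of_pos_left this hε
    simp only [hg]
    linarith
  have hsurj : Function.Surjective g := by
    intro x
    exact ⟨⟨ρ x, (hρ x).1⟩, (hρ x).2⟩
  let iso := StrictMono.orderIsoOfSurjective g hmono hsurj
  have hcont : Continuous fun x => ((iso.symm x : Set.Ioi (0:ℝ)) : ℝ) :=
    continuous_subtype_val.comp iso.symm.continuous
  have heq : ∀ x, ρ x = ((iso.symm x : Set.Ioi (0:ℝ)) : ℝ) := by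
    intro x
    have h1 : g (iso.symm x) = x := iso.apply_symm_apply x
    have h2 : g ⟨ρ x, (hρ x).1⟩ = x := (hρ x).2
    have := hmono.injective (h2.trans h1.symm)
    exact congrArg Subtype.val this
  have : ρ = fun x => ((iso.symm x : Set.Ioi (0:ℝ)) : ℝ) := funext heq
  rw [this]; exact hcont

private lemma rho_deriv (hε : 0 < ε)
    (hρ : ∀ x : ℝ, 0 < ρ x ∧ ρ x + ε * Real.log (ρ x) = x) (x : ℝ) :
    HasDerivAt ρ (1 + ε * (ρ x)⁻¹)⁻¹ x := by
  have hpos := (hρ x).1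
  have hf : HasDerivAt (fun t : ℝ => t + ε * Real.log t) (1 + ε * (ρ x)⁻¹) (ρ x) :=
    (hasDerivAt_id _).add ((Real.hasDerivAt_log (ne_of_gt hpos)).const_mul ε)
  have hf' : (1 + ε * (ρ x)⁻¹) ≠ 0 := by positivity
  exact HasDerivAt.of_local_left_inverse ((rho_cont hε hρ).continuousAt) hf hf'
    (Filter.Eventually.of_forall fun y => (hρ y).2)

private lemma L_deriv (hε : 0 < ε)
    (hρ : ∀ x : ℝ, 0 < ρ x ∧ ρ x + ε * Real.log (ρ x) = x) (x : ℝ) :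
    deriv (fun z : ℝ => ε * z + (z - ρ z) / ε) x = ε + 1 / (ρ x + ε) := by
  have hpos := (hρ x).1
  have h : HasDerivAt (fun z : ℝ => ε * z + (z - ρ z) / ε)
      (ε * 1 + (1 - (1 + ε * (ρ x)⁻¹)⁻¹) / ε) x :=
    ((hasDerivAt_id x).const_mul ε).add
      (((hasDerivAt_id x).sub (rho_deriv hε hρ x)).div_const ε)
  rw [h.deriv]
  have h1 : (1 + ε * (ρ x)⁻¹) ≠ 0 := by positivity
  field_simp
  ring

end aux

/-- For every ε > 0, the function `x ↦ 1/L_ε'(x)` is a contraction on ℝ: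
`|1/L_ε'(x) − 1/L_ε'(y)| ≤ |x − y|` for all x, y ∈ ℝ, where
`L_ε(y) = ε·y + (y − ρ_ε(y))/ε` and ρ_ε is the ε-resolvent of the logarithm. -/
theorem stmt9 (ε : ℝ) (hε : 0 < ε) (ρ : ℝ → ℝ)
    (hρ : ∀ x : ℝ, 0 < ρ x ∧ ρ x + ε * Real.log (ρ x) = x) (x y : ℝ) :
    |1 / deriv (fun z : ℝ => ε * z + (z - ρ z) / ε) x -
      1 / deriv (fun z : ℝ => ε * z + (z - ρ z) / ε) y| ≤ |x - y| := by
  rw [L_deriv hε hρ x, L_deriv hε hρ y]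
  set a := ρ x with hax
  set b := ρ y with hby
  have ha : 0 < a := (hρ x).1
  have hb : 0 < b := (hρ y).1
  have hxa : a + ε * Real.log a = x := (hρ x).2
  have hyb : b + ε * Real.log b = y := (hρ y).2
  -- step 1 : |a - b| ≤ |x - y|
  have key : |a - b| ≤ |x - y| := by
    rcases le_total a b with h | h
    · have hlog : Real.log a ≤ Real.log b := Real.log_le_log ha h
      have hxy : x ≤ y := by nlinarith
      rw [abs_of_nonpos (by linarith), abs_of_nonpos (by linarith)]
      nlinarith
    · have hlog : Real.log b ≤ Real.log a := Real.log_le_log hb h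
      have hxy : y ≤ x := by nlinarith
      rw [abs_of_nonneg (by linarith), abs_of_nonneg (by linarith)]
      nlinarith
  -- step 2 : the map t ↦ 1/(ε + 1/(t+ε)) is 1-Lipschitz on positives
  have hda : (0:ℝ) < ε + 1 / (a + ε) := by positivity
  have hdb : (0:ℝ) < ε + 1 / (b + ε) := by positivity
  have hfa : 1 / (ε + 1 / (a + ε)) = (a + ε) / (ε * (a + ε) + 1) := by
    rw [div_eq_div_iff (by positivity) (by positivity)]; field_simp
  have hfb : 1 / (ε + 1 / (b + ε)) = (b + ε) / (ε * (b + ε) + 1) := by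
    rw [div_eq_div_iff (by positivity) (by positivity)]; field_simp
  rw [hfa, hfb]
  have hDa : (0:ℝ) < ε * (a + ε) + 1 := by positivity
  have hDb : (0:ℝ) < ε * (b + ε) + 1 := by positivity
  have hdiff : (a + ε) / (ε * (a + ε) + 1) - (b + ε) / (ε * (b + ε) + 1)
      = (a - b) / ((ε * (a + ε) + 1) * (ε * (b + ε) + 1)) := by
    field_simp
    ring
  rw [hdiff, abs_div]
  have h1 : (1:ℝ) ≤ |(ε * (a + ε) + 1) * (ε * (b + ε) + 1)| := by
    rw [abs_of_pos (by positivity)]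
    have hp : (1:ℝ) ≤ ε * (a + ε) + 1 := by nlinarith
    have hq : (1:ℝ) ≤ ε * (b + ε) + 1 := by nlinarith
    nlinarith [mul_le_mul hp hq (by norm_num : (0:ℝ) ≤ 1) (by linarith : (0:ℝ) ≤ ε * (a + ε) + 1)]
  calc |a - b| / |(ε * (a + ε) + 1) * (ε * (b + ε) + 1)|
      ≤ |a - b| / 1 := by
        apply div_le_div_of_nonneg_left (abs_nonneg _) (by norm_num) h1
    _ = |a - b| := by rw [div_one]
    _ ≤ |x - y| := key
end

section
/- For every ε > 0 and every x ∈ ℝ, one has 0 < 1/L_ε'(x) ≤ |x| + 2. (In particular ρ_ε(1) = 1, so that 1/L_ε'(1) = (1 + ε)/(1 + ε + ε²) ≤ 1, and the bound follows from the 1-Lipschitz continuity of 1/L_ε'.) -/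
/-! The resolvent `ρ_ε` inverts `y ↦ y + ε log y`, whose derivative at `t` is `1 + ε / t`; hence
`ρ_ε' = ρ_ε / (ρ_ε + ε)` and `L_ε' = ε + 1 / (ρ_ε + ε)`. Writing `t = ρ_ε(x)`, elementary algebra
gives `1 / L_ε'(x) ≤ t + 1`, and `t ≤ |x| + 1` because `t > 1` forces `x = t + ε log t ≥ t`. -/

open Real Set

section RightInverse

variable {α β : Type*} [LinearOrder α] [LinearOrder β] {f : α → β} {g : β → α} {s : Set α}

theorem StrictMonoOn.strictMono_of_rightInverse (hf : StrictMonoOn f s) (hgs : ∀ y, g y ∈ s)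
    (hfg : ∀ y, f (g y) = y) : StrictMono g := by
  intro a b hab
  by_contra! hba
  have := hf.monotoneOn (hgs b) (hgs a) hba
  rw [hfg, hfg] at this
  exact hab.not_ge this

theorem StrictMonoOn.subset_range_of_rightInverse (hf : StrictMonoOn f s) (hgs : ∀ y, g y ∈ s)
    (hfg : ∀ y, f (g y) = y) : s ⊆ range g :=
  fun t ht => ⟨f t, hf.injOn (hgs _) ht (hfg _)⟩

end RightInverse

section Resolvent

variable {ε : ℝ} {ρ : ℝ → ℝ}

theorem strictMonoOn_add_const_mul_log (hε : 0 < ε) :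
    StrictMonoOn (fun y => y + ε * log y) (Ioi 0) := by
  intro a ha b _ hab
  have := mul_lt_mul_of_pos_left (log_lt_log ha hab) hε
  simp only
  linarith

theorem continuous_resolvent (hε : 0 < ε) (hρ : ∀ x, 0 < ρ x ∧ ρ x + ε * log (ρ x) = x) :
    Continuous ρ := by
  have hmono := strictMonoOn_add_const_mul_log hε
  have hpos : ∀ x, ρ x ∈ Ioi 0 := fun x => (hρ x).1
  have hinv : ∀ x, ρ x + ε * log (ρ x) = x := fun x => (hρ x).2
  refine continuous_iff_continuousAt.mpr fun x =>
    continuousAt_of_monotoneOn_of_image_mem_nhds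
      ((hmono.strictMono_of_rightInverse hpos hinv).monotone.monotoneOn univ) Filter.univ_mem ?_
  rw [image_univ]
  exact Filter.mem_of_superset (Ioi_mem_nhds (hpos x))
    (hmono.subset_range_of_rightInverse hpos hinv)

theorem hasDerivAt_resolvent (hε : 0 < ε) (hρ : ∀ x, 0 < ρ x ∧ ρ x + ε * log (ρ x) = x)
    (x : ℝ) : HasDerivAt ρ (ρ x / (ρ x + ε)) x := by
  have ht : 0 < ρ x := (hρ x).1
  have hlog : HasDerivAt (fun y => y + ε * log y) (1 + ε * (ρ x)⁻¹) (ρ x) :=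
    (hasDerivAt_id _).add ((hasDerivAt_log ht.ne').const_mul ε)
  have hinv := hlog.of_local_left_inverse (continuous_resolvent hε hρ).continuousAt
    (by positivity) (Filter.Eventually.of_forall fun y => (hρ y).2)
  refine hinv.congr_deriv ?_
  field_simp

theorem hasDerivAt_yosida (hε : 0 < ε) (hρ : ∀ x, 0 < ρ x ∧ ρ x + ε * log (ρ x) = x)
    (x : ℝ) : HasDerivAt (fun z => ε * z + (z - ρ z) / ε) (ε + 1 / (ρ x + ε)) x := by
  have ht : 0 < ρ x := (hρ x).1
  refine (((hasDerivAt_id' x).const_mul ε).add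
    (((hasDerivAt_id' x).sub (hasDerivAt_resolvent hε hρ x)).div_const ε)).congr_deriv ?_
  field_simp
  ring

end Resolvent

theorem le_abs_add_one_of_add_mul_log_eq {ε t x : ℝ} (hε : 0 ≤ ε)
    (hx : t + ε * log t = x) : t ≤ |x| + 1 := by
  rcases le_or_gt t 1 with ht1 | ht1
  · linarith [abs_nonneg x]
  · have : 0 ≤ ε * log t := mul_nonneg hε (log_nonneg ht1.le)
    linarith [le_abs_self x]

theorem one_div_add_one_div_le_add_one {ε t : ℝ} (hε : 0 < ε) (ht : 0 ≤ t) :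
    1 / (ε + 1 / (t + ε)) ≤ t + 1 := by
  rw [div_le_iff₀ (by positivity)]
  field_simp
  -- `(t + 1)(t + ε) ≥ ε`, so the right side is at least `t + 1 + ε² ≥ t + ε`
  have hprod : ε ≤ (t + 1) * (t + ε) := by nlinarith
  nlinarith [sq_nonneg (ε - 1)]

/-- For every ε > 0 and every x ∈ ℝ, one has `0 < 1/L_ε'(x) ≤ |x| + 2`,
where `L_ε(y) = ε·y + (y − ρ_ε(y))/ε` and ρ_ε is the ε-resolvent of the logarithm. -/
theorem stmt10 (ε : ℝ) (hε : 0 < ε) (ρ : ℝ → ℝ)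
    (hρ : ∀ x : ℝ, 0 < ρ x ∧ ρ x + ε * Real.log (ρ x) = x) (x : ℝ) :
    0 < 1 / deriv (fun z : ℝ => ε * z + (z - ρ z) / ε) x ∧
    1 / deriv (fun z : ℝ => ε * z + (z - ρ z) / ε) x ≤ |x| + 2 := by
  rw [(hasDerivAt_yosida hε hρ x).deriv]
  obtain ⟨ht, hx⟩ := hρ x
  refine ⟨by positivity, ?_⟩
  calc 1 / (ε + 1 / (ρ x + ε)) ≤ ρ x + 1 := one_div_add_one_div_le_add_one hε ht.le
    _ ≤ |x| + 1 + 1 := by gcongr; exact le_abs_add_one_of_add_mul_log_eq hε.le hx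
    _ = |x| + 2 := by ring
end

section
/- Let n be a unit vector in ℝ³ (with the Euclidean inner product ⟨·,·⟩), and for w ∈ ℝ³ write w_T := w − ⟨w,n⟩·n. Let σ_T, u, v ∈ ℝ³ with ⟨σ_T, n⟩ = 0, let χ ∈ ℝ, and let F > 0 (the friction threshold F = 𝔠(θ−θ_s)·|σ_N + χ u_N|). Then the following are equivalent: (a) there exists z ∈ d(v) such that σ_T = −χ·u_T − F·z; (b) |σ_T + χ·u_T| ≤ F, and if |σ_T + χ·u_T| < F then v_T = 0, and if |σ_T + χ·u_T| = F then there exists ν ≥ 0 with v_T = −ν·(σ_T + χ·u_T). (This is the generalized dry-friction Coulomb law.) -/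
open scoped Classical

/-- The tangential part `w_T := w − ⟨w,n⟩·n` of a vector w relative to a unit vector n. -/
noncomputable def tang (n w : EuclideanSpace ℝ (Fin 3)) : EuclideanSpace ℝ (Fin 3) :=
  w - (inner ℝ w n : ℝ) • n

/-- The set-valued map d: `d(v) = {v_T/|v_T|}` if `v_T ≠ 0`, and
`d(v) = {w_T : |w| ≤ 1}` if `v_T = 0`. -/

noncomputable def dSet (n v : EuclideanSpace ℝ (Fin 3)) : Set (EuclideanSpace ℝ (Fin 3)) :=
  if tang n v ≠ 0 then {(‖tang n v‖)⁻¹ • tang n v}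
  else {z | ∃ w : EuclideanSpace ℝ (Fin 3), ‖w‖ ≤ 1 ∧ z = tang n w}

/-! With `s := σ_T + χ u_T`, condition (a) says `s = -F z` for some `z ∈ d(v)`.
If `v_T ≠ 0`, then `z = v_T/|v_T|`, so `|s| = F` and `v_T = -(|v_T|/F) s`. If `v_T = 0`, then
`d(v)` is the tangential closed unit ball, and since `s` is tangential, `s = -F z` has a solution
there exactly when `|s| ≤ F`. -/

section NormedSpace

variable {E : Type*} [NormedAddCommGroup E] [NormedSpace ℝ E]

theorem eq_neg_smul_normalize_iff {t s : E} (ht : t ≠ 0) {F : ℝ} (hF : 0 < F) :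
    s = -(F • ‖t‖⁻¹ • t) ↔ ‖s‖ = F ∧ ∃ ν : ℝ, 0 ≤ ν ∧ t = -(ν • s) := by
  have ht' : ‖t‖ ≠ 0 := norm_ne_zero_iff.mpr ht
  constructor
  · rintro rfl
    refine ⟨?_, ‖t‖ / F, by positivity, ?_⟩
    · rw [norm_neg, norm_smul, norm_smul, norm_inv, norm_norm, Real.norm_of_nonneg hF.le,
        inv_mul_cancel₀ ht', mul_one]
    · rw [smul_neg, neg_neg, smul_smul, smul_smul, div_mul_cancel₀ _ hF.ne',
        mul_inv_cancel₀ ht', one_smul]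
  · rintro ⟨hsF, ν, hν, rfl⟩
    have hν' : ν ≠ 0 := by rintro rfl; simp at ht
    have hnorm : ‖-(ν • s)‖ = ν * F := by
      rw [norm_neg, norm_smul, Real.norm_of_nonneg hν, hsF]
    rw [hnorm, smul_neg, smul_neg, neg_neg, smul_smul, smul_smul,
      show F * (ν * F)⁻¹ * ν = 1 by field_simp, one_smul]

end NormedSpace

section InnerProductSpace

variable {E : Type*} [NormedAddCommGroup E] [InnerProductSpace ℝ E]

theorem exists_tangential_ball_eq_neg_smul_iff {n s : E} (hs : (inner ℝ s n : ℝ) = 0)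
    {F : ℝ} (hF : 0 < F) :
    (∃ z : E, ((inner ℝ z n : ℝ) = 0 ∧ ‖z‖ ≤ 1) ∧ s = -(F • z)) ↔ ‖s‖ ≤ F := by
  constructor
  · rintro ⟨z, ⟨-, hz⟩, rfl⟩
    rw [norm_neg, norm_smul, Real.norm_of_nonneg hF.le]
    exact mul_le_of_le_one_right hF.le hz
  · intro hsF
    refine ⟨-(F⁻¹ • s), ⟨?_, ?_⟩, ?_⟩
    · rw [inner_neg_left, real_inner_smul_left, hs, mul_zero, neg_zero]
    · rw [norm_neg, norm_smul, norm_inv, Real.norm_of_nonneg hF.le, inv_mul_le_iff₀ hF, mul_one]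
      exact hsF
    · rw [smul_neg, neg_neg, smul_smul, mul_inv_cancel₀ hF.ne', one_smul]

end InnerProductSpace

section TangentialPart

variable {n : EuclideanSpace ℝ (Fin 3)}

theorem inner_tang_eq_zero (hn : ‖n‖ = 1) (w : EuclideanSpace ℝ (Fin 3)) :
    (inner ℝ (tang n w) n : ℝ) = 0 := by
  rw [tang, inner_sub_left, real_inner_smul_left, real_inner_self_eq_norm_mul_norm, hn]
  ring

theorem tang_eq_self {w : EuclideanSpace ℝ (Fin 3)} (hw : (inner ℝ w n : ℝ) = 0) :
    tang n w = w := by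
  rw [tang, hw, zero_smul, sub_zero]

theorem norm_tang_sq (hn : ‖n‖ = 1) (w : EuclideanSpace ℝ (Fin 3)) :
    ‖tang n w‖ ^ 2 = ‖w‖ ^ 2 - (inner ℝ w n : ℝ) ^ 2 := by
  rw [tang, norm_sub_sq_real, real_inner_smul_right, norm_smul, Real.norm_eq_abs, hn, mul_one,
    sq_abs]
  ring

theorem norm_tang_le (hn : ‖n‖ = 1) (w : EuclideanSpace ℝ (Fin 3)) : ‖tang n w‖ ≤ ‖w‖ :=
  sq_le_sq₀ (norm_nonneg _) (norm_nonneg _) |>.mp <| by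
    rw [norm_tang_sq hn]
    exact sub_le_self _ (sq_nonneg _)

theorem dSet_of_tang_ne_zero {v : EuclideanSpace ℝ (Fin 3)} (hv : tang n v ≠ 0) :
    dSet n v = {‖tang n v‖⁻¹ • tang n v} :=
  if_pos hv

theorem dSet_of_tang_eq_zero (hn : ‖n‖ = 1) {v : EuclideanSpace ℝ (Fin 3)} (hv : tang n v = 0) :
    dSet n v = {z | (inner ℝ z n : ℝ) = 0 ∧ ‖z‖ ≤ 1} := by
  rw [dSet, if_neg (not_not.mpr hv)]
  ext z
  constructor
  · rintro ⟨w, hw, rfl⟩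
    exact ⟨inner_tang_eq_zero hn w, (norm_tang_le hn w).trans hw⟩
  · rintro ⟨hz, hz1⟩
    exact ⟨z, hz1, (tang_eq_self hz).symm⟩

end TangentialPart

/-- the generalized dry-friction Coulomb law. For a unit vector n,
σ_T tangential (⟨σ_T,n⟩ = 0), u, v ∈ ℝ³, χ ∈ ℝ, and friction threshold F > 0:
(a) ∃ z ∈ d(v), σ_T = −χ·u_T − F·z
is equivalent to
(b) |σ_T + χ·u_T| ≤ F, with v_T = 0 if the inequality is strict, and
v_T = −ν·(σ_T + χ·u_T) for some ν ≥ 0 in the case of equality. -/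
theorem stmt14 (n : EuclideanSpace ℝ (Fin 3)) (hn : ‖n‖ = 1)
    (σT u v : EuclideanSpace ℝ (Fin 3)) (hσT : (inner ℝ σT n : ℝ) = 0)
    (χ F : ℝ) (hF : 0 < F) :
    (∃ z ∈ dSet n v, σT = -(χ • tang n u) - F • z) ↔
    (‖σT + χ • tang n u‖ ≤ F ∧
     (‖σT + χ • tang n u‖ < F → tang n v = 0) ∧
     (‖σT + χ • tang n u‖ = F →
        ∃ ν : ℝ, 0 ≤ ν ∧ tang n v = -(ν • (σT + χ • tang n u)))) := by
  set s := σT + χ • tang n u with hs_def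
  have hs : (inner ℝ s n : ℝ) = 0 := by
    rw [inner_add_left, real_inner_smul_left, hσT, inner_tang_eq_zero hn, mul_zero, add_zero]
  have hσ (z : EuclideanSpace ℝ (Fin 3)) : σT = -(χ • tang n u) - F • z ↔ s = -(F • z) := by
    rw [hs_def, ← eq_sub_iff_add_eq, neg_sub_comm]
  simp_rw [hσ]
  by_cases hv : tang n v = 0
  · rw [dSet_of_tang_eq_zero hn hv]
    simp only [Set.mem_ofPred_eq, exists_tangential_ball_eq_neg_smul_iff hs hF, hv]
    exact ⟨fun h => ⟨h, fun _ => trivial, fun _ => ⟨0, le_rfl, by rw [zero_smul, neg_zero]⟩⟩,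
      And.left⟩
  · simp only [dSet_of_tang_ne_zero hv, Set.mem_singleton_iff, exists_eq_left, eq_neg_smul_normalize_iff hv hF]
    exact ⟨fun ⟨hsF, hν⟩ => ⟨hsF.le, fun h => absurd hsF h.ne, fun _ => hν⟩,
      fun ⟨hle, hlt, hν⟩ =>
        have hsF := hle.eq_of_not_lt (mt hlt hv)
        ⟨hsF, hν hsF⟩⟩
end
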